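/- arXiv:1501.04343 — 6 statements merged into one kernel-verified Lean document; each statement's English description precedes it below -/
import Mathlib

section
/- Suppose each task T_j in a finite set S has deadline d_j, workload D_j, parallelism bound k_j, and a feasible allocation y_j : {1,...,d} → {0,...,k_j} with y_j(t) = 0 for t > d_j and Σ_t y_j(t) = D_j, such that Σ_j y_j(t) ≤ C for all t. Then for every m ∈ {0,...,L}, the total remaining workload after interval [τ_m+1, d], namely Σ_{j∈S} D_j minus the maximum (capacity-constrained) workload λ_{L-m}^C(S) processable in [τ_m+1, d], satisfies μ_m^C(S) ≤ C·τ_m. (Necessity of the boundary condition.) -/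
/-- Ceiling division: `⌈D/k⌉`. -/
def ceilDiv (D k : ℕ) : ℕ := (D + k - 1) / k

/-- Uncapacitated maximum workload `λ_m(S)` of the task set `S` in `[τ_{L-m}+1, τ_L]`. -/
def lamS {ι : Type*} (S : Finset ι) (dl Dw kb : ι → ℕ) (τ : ℕ → ℕ) (L m : ℕ) : ℕ :=
  ∑ j ∈ S,
    if ceilDiv (Dw j) (kb j) ≤ dl j - τ (L - m) then Dw j
    else kb j * (dl j - τ (L - m))

/-- The capacity-constrained sequence `λ_m^C`. -/
def lamCseq (C L : ℕ) (τ lamf : ℕ → ℕ) : ℕ → ℕ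
  | 0 => 0
  | m + 1 =>
      lamCseq C L τ lamf m +
        min (lamf (m + 1) - lamCseq C L τ lamf m) (C * (τ (L - m) - τ (L - m - 1)))

/-- Remaining workload `μ_m^C(S)` of `S` after optimally utilizing `[τ_m+1, τ_L]`. -/
def muC {ι : Type*} (S : Finset ι) (dl Dw kb : ι → ℕ) (τ : ℕ → ℕ) (C L m : ℕ) : ℕ :=
  (∑ j ∈ S, Dw j) - lamCseq C L τ (lamS S dl Dw kb τ L) (L - m)

/-- The boundary condition: `μ_m^C(S) ≤ C·τ_m` for all `m ∈ {0,…,L}`. -/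
def BoundaryCond {ι : Type*} (S : Finset ι) (dl Dw kb : ι → ℕ) (τ : ℕ → ℕ) (C L : ℕ) : Prop :=
  ∀ m ≤ L, muC S dl Dw kb τ C L m ≤ C * τ m

/-!
Work that a feasible schedule performs after `τ_m` is at most `λ_{L-m}^C`: walking back
interval by interval, the work done after `τ_{L-r-1}` is bounded both by the uncapacitated
bound `λ_{r+1}` (each task does at most `min(D_j, k_j (d_j - τ))` there) and by the work done
after `τ_{L-r}` plus the capacity `C (τ_{L-r} - τ_{L-r-1})` of the interval in between, which
is exactly the recursion defining `λ^C`. The remaining work must fit into `[1, τ_m]`, whose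
capacity is `C τ_m`.
-/

open Finset

section

variable {ι : Type*}

theorem sum_sum_Ioc_le_mul_sub (S : Finset ι) (y : ι → ℕ → ℕ) {C : ℕ}
    (hcap : ∀ t, ∑ j ∈ S, y j t ≤ C) (a b : ℕ) :
    ∑ j ∈ S, ∑ t ∈ Ioc a b, y j t ≤ C * (b - a) := by
  rw [sum_comm]
  calc ∑ t ∈ Ioc a b, ∑ j ∈ S, y j t ≤ ∑ _t ∈ Ioc a b, C := sum_le_sum fun t _ => hcap t
    _ = C * (b - a) := by simp [mul_comm]

theorem sum_sum_Ioc_consecutive (S : Finset ι) (y : ι → ℕ → ℕ) {a b c : ℕ}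
    (hab : a ≤ b) (hbc : b ≤ c) :
    ∑ j ∈ S, ∑ t ∈ Ioc a c, y j t
      = ∑ j ∈ S, ∑ t ∈ Ioc a b, y j t + ∑ j ∈ S, ∑ t ∈ Ioc b c, y j t := by
  rw [← sum_add_distrib]
  exact sum_congr rfl fun j _ => (sum_Ioc_consecutive _ hab hbc).symm

theorem sum_Ioc_le_min_of_schedule {f : ℕ → ℕ} {D k dl d : ℕ} (hk : ∀ t, f t ≤ k)
    (hdl : ∀ t, dl < t → f t = 0) (hD : ∑ t ∈ Icc 1 d, f t = D) (a : ℕ) :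
    ∑ t ∈ Ioc a d, f t ≤ min D (k * (dl - a)) := by
  refine le_min ?_ ?_
  · rw [← hD]
    refine sum_le_sum_of_subset fun t ht => ?_
    simp only [mem_Ioc, mem_Icc] at ht ⊢
    omega
  · calc ∑ t ∈ Ioc a d, f t ≤ ∑ t ∈ Ioc a dl, f t := by
          refine sum_le_sum_of_ne_zero fun t ht hft => ?_
          simp only [mem_Ioc] at ht ⊢
          exact ⟨ht.1, not_lt.1 fun h => hft (hdl t h)⟩
      _ ≤ #(Ioc a dl) • k := sum_le_card_nsmul _ _ _ fun t _ => hk t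
      _ = k * (dl - a) := by simp [mul_comm]

theorem sum_min_le_lamS (S : Finset ι) (dl Dw kb : ι → ℕ) (τ : ℕ → ℕ) (L m : ℕ) :
    ∑ j ∈ S, min (Dw j) (kb j * (dl j - τ (L - m))) ≤ lamS S dl Dw kb τ L m :=
  sum_le_sum fun j _ => by split_ifs <;> simp

end

theorem le_lamCseq {C L : ℕ} {τ lamf w : ℕ → ℕ} (h0 : w 0 = 0)
    (hlam : ∀ r, w (r + 1) ≤ lamf (r + 1))
    (hcap : ∀ r, w (r + 1) ≤ w r + C * (τ (L - r) - τ (L - r - 1))) :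
    ∀ r, w r ≤ lamCseq C L τ lamf r
  | 0 => h0.le
  | r + 1 => by
    have ih := le_lamCseq h0 hlam hcap r
    have hlam_r := hlam r
    have hcap_r := hcap r
    rw [lamCseq]
    omega

theorem boundary_condition_necessary_general {ι : Type*} (S : Finset ι) (dl Dw kb : ι → ℕ)
    (C L d : ℕ) (τ : ℕ → ℕ)
    (hτmono : ∀ m < L, τ m < τ (m + 1)) (hτL : τ L = d)
    (y : ι → ℕ → ℕ)
    (hyk : ∀ j ∈ S, ∀ t, y j t ≤ kb j)
    (hydl : ∀ j ∈ S, ∀ t, dl j < t → y j t = 0)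
    (hyD : ∀ j ∈ S, ∑ t ∈ Finset.Icc 1 d, y j t = Dw j)
    (hcap : ∀ t, ∑ j ∈ S, y j t ≤ C) :
    ∀ m ≤ L, muC S dl Dw kb τ C L m ≤ C * τ m := by
  have hτ : MonotoneOn τ (Set.Iic L) := monotoneOn_of_le_succ Set.ordConnected_Iic
    fun a _ _ ha => (hτmono a (Order.succ_eq_add_one a ▸ ha : a + 1 ≤ L)).le
  have hτd : ∀ m ≤ L, τ m ≤ d := fun m hm => hτL ▸ hτ hm (Set.mem_Iic.2 le_rfl) hm
  set w : ℕ → ℕ := fun r => ∑ j ∈ S, ∑ t ∈ Ioc (τ (L - r)) d, y j t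
  have hw : ∀ r, w r ≤ lamCseq C L τ (lamS S dl Dw kb τ L) r := by
    refine le_lamCseq (by simp [w, hτL]) (fun r => ?_) (fun r => ?_)
    · exact (sum_le_sum fun j hj =>
        sum_Ioc_le_min_of_schedule (hyk j hj) (hydl j hj) (hyD j hj) _).trans
        (sum_min_le_lamS ..)
    · have hle : τ (L - (r + 1)) ≤ τ (L - r) := hτ (by simp) (by simp) (by omega)
      simp only [w, sum_sum_Ioc_consecutive S y hle (hτd _ (Nat.sub_le L r)), Nat.sub_sub]
      have := sum_sum_Ioc_le_mul_sub S y hcap (τ (L - (r + 1))) (τ (L - r))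
      omega
  intro m hm
  have htotal : ∑ j ∈ S, Dw j = ∑ j ∈ S, ∑ t ∈ Ioc 0 (τ m), y j t + w (L - m) := by
    simp only [w, Nat.sub_sub_self hm]
    rw [← sum_sum_Ioc_consecutive S y (Nat.zero_le _) (hτd m hm)]
    exact sum_congr rfl fun j hj => by rw [← hyD j hj, ← Icc_add_one_left_eq_Ioc, zero_add]
  have hearly := Nat.sub_zero (τ m) ▸ sum_sum_Ioc_le_mul_sub S y hcap 0 (τ m)
  have hlate := hw (L - m)
  unfold muC
  omega

/-- Necessity of the boundary condition: if the task set `S` admits a feasible schedule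
on `C` machines, then `μ_m^C(S) ≤ C·τ_m` for every `m ∈ {0,…,L}`. -/
theorem boundary_condition_necessary {ι : Type*} (S : Finset ι) (dl Dw kb : ι → ℕ)
    (C L d : ℕ) (τ : ℕ → ℕ)
    (hτ0 : τ 0 = 0) (hτmono : ∀ m < L, τ m < τ (m + 1)) (hτL : τ L = d) (hL : 0 < L)
    (hdl : ∀ j ∈ S, ∃ m, 1 ≤ m ∧ m ≤ L ∧ dl j = τ m)
    (hkpos : ∀ j ∈ S, 0 < kb j)
    (y : ι → ℕ → ℕ)
    (hyk : ∀ j ∈ S, ∀ t, y j t ≤ kb j)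
    (hydl : ∀ j ∈ S, ∀ t, dl j < t → y j t = 0)
    (hyD : ∀ j ∈ S, ∑ t ∈ Finset.Icc 1 d, y j t = Dw j)
    (hcap : ∀ t, ∑ j ∈ S, y j t ≤ C) :
    ∀ m ≤ L, muC S dl Dw kb τ C L m ≤ C * τ m :=
  boundary_condition_necessary_general S dl Dw kb C L d τ hτmono hτL y hyk hydl hyD hcap
end

section
/- For a single task with workload D, deadline d, parallelism bound k, and D ≤ kd, the 'latest-first' allocation defined by y(t) = min(k, D - Σ_{t'>t} y(t')) computed from t = d down to t = 1 is feasible (0 ≤ y(t) ≤ k and Σ_t y(t) = D) and, among all feasible allocations, maximizes Σ_{t=τ+1}^{d} y(t) for every τ simultaneously. -/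
/-- The latest-first allocation `y(t) = min(k, D - Σ_{t'>t} y(t'))` (computed from
`t = d` down to `t = 1`) is feasible and simultaneously maximizes the workload
processed in every suffix interval `[τ+1, d]` among all feasible allocations. -/
theorem latest_first_allocation_optimal (D d k : ℕ) (hk : 0 < k) (hd : 0 < d)
    (hD : 0 < D) (hDd : D ≤ k * d) (y : ℕ → ℕ)
    (hy : ∀ t ∈ Finset.Icc 1 d, y t = min k (D - ∑ t' ∈ Finset.Ioc t d, y t')) :
    (∀ t ∈ Finset.Icc 1 d, y t ≤ k) ∧
    (∑ t ∈ Finset.Icc 1 d, y t = D) ∧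
    (∀ τ ≤ d, ∀ z : ℕ → ℕ, (∀ t, z t ≤ k) → (∑ t ∈ Finset.Icc 1 d, z t = D) →
      ∑ t ∈ Finset.Icc (τ + 1) d, z t ≤ ∑ t ∈ Finset.Icc (τ + 1) d, y t) := by
  have key : ∀ m τ, τ ≤ d → d - τ = m →
      ∑ t ∈ Finset.Ioc τ d, y t = min D (k * (d - τ)) := by
    intro m
    induction m with
    | zero =>
      intro τ hτ hm
      have : τ = d := by omega
      subst this
      simp
    | succ n ih =>
      intro τ hτ hm
      have hτd : τ < d := by omega
      have hsplit : ∑ t ∈ Finset.Ioc τ (τ+1), y t + ∑ t ∈ Finset.Ioc (τ+1) d, y t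
          = ∑ t ∈ Finset.Ioc τ d, y t :=
        Finset.sum_Ioc_consecutive _ (by omega) (by omega)
      have h1 : Finset.Ioc τ (τ+1) = {τ+1} := by
        ext x; simp [Finset.mem_Ioc]
      have hih : ∑ t ∈ Finset.Ioc (τ+1) d, y t = min D (k * (d - (τ+1))) :=
        ih (τ+1) (by omega) (by omega)
      have hyv : y (τ+1) = min k (D - ∑ t' ∈ Finset.Ioc (τ+1) d, y t') :=
        hy (τ+1) (by simp [Finset.mem_Icc]; omega)
      have hmul : k * (d - τ) = k * (d - (τ+1)) + k := by
        have h : d - τ = (d - (τ+1)) + 1 := by omega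
        rw [h, Nat.mul_add, Nat.mul_one]
      rw [← hsplit, h1, Finset.sum_singleton, hyv, hih]
      omega
  have hIcc : Finset.Icc 1 d = Finset.Ioc 0 d := by
    ext x; simp [Finset.mem_Icc, Finset.mem_Ioc]; omega
  have hsum : ∑ t ∈ Finset.Icc 1 d, y t = D := by
    rw [hIcc, key d 0 (by omega) (by omega)]
    simpa using hDd
  refine ⟨?_, hsum, ?_⟩
  · intro t ht
    rw [hy t ht]
    exact Nat.min_le_left _ _
  · intro τ hτ z hz hzsum
    have hIcc' : Finset.Icc (τ+1) d = Finset.Ioc τ d := by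
      ext x; simp [Finset.mem_Icc, Finset.mem_Ioc]
    rw [hIcc', key (d - τ) τ hτ rfl]
    have h1 : ∑ t ∈ Finset.Ioc τ d, z t ≤ D := by
      rw [← hzsum, hIcc]
      exact Finset.sum_le_sum_of_subset (Finset.Ioc_subset_Ioc_left (by omega))
    have h2 : ∑ t ∈ Finset.Ioc τ d, z t ≤ k * (d - τ) := by
      calc ∑ t ∈ Finset.Ioc τ d, z t ≤ ∑ _t ∈ Finset.Ioc τ d, k :=
            Finset.sum_le_sum (fun t _ => hz t)
        _ = (d - τ) * k := by rw [Finset.sum_const, Nat.card_Ioc, smul_eq_mul]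
        _ = k * (d - τ) := Nat.mul_comm _ _
    omega
end

section
/- Let C, d_1', d_2' ∈ ℕ with 1 ≤ d_1' < d_2'. Consider C·d_1' unit tasks each with value 1+ε, workload 1, parallelism bound 1, deadline d_1', and some tasks with value d_2'-d_1'+1, workload d_2'-d_1'+1, parallelism bound 1, deadline d_2'. Any greedy algorithm that processes tasks in nonincreasing marginal-value order and accepts a task iff it remains jointly feasible will accept all unit tasks and reject all long tasks, achieving social welfare (1+ε)·C·d_1', while the schedule accepting C long tasks and C·(d_1'-1) unit tasks achieves welfare at least C·(d_2'-d_1'+1) + (1+ε)·C·(d_1'-1). Consequently the greedy approximation ratio on this instance is at most ((1+ε)d_1') / ((1+ε)(d_1'-1) + (d_2'-d_1'+1)). -/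
/-- Workloads in the lower-bound instance: unit tasks and long tasks. -/
def wl6 (d1 d2 : ℕ) {a b : ℕ} : Fin a ⊕ Fin b → ℕ :=
  Sum.elim (fun _ => 1) (fun _ => d2 - d1 + 1)

/-- Deadlines in the lower-bound instance. -/
def dl6 (d1 d2 : ℕ) {a b : ℕ} : Fin a ⊕ Fin b → ℕ :=
  Sum.elim (fun _ => d1) (fun _ => d2)

/-- Values in the lower-bound instance. -/
def val6 (ε : ℝ) (d1 d2 : ℕ) {a b : ℕ} : Fin a ⊕ Fin b → ℝ :=
  Sum.elim (fun _ => 1 + ε) (fun _ => ((d2 - d1 + 1 : ℕ) : ℝ))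

/-- Feasibility of fully scheduling the set `A` of tasks of the lower-bound instance on
`C` machines (all parallelism bounds equal `1`). -/
def Feas6 (C d1 d2 : ℕ) {a b : ℕ} (A : Finset (Fin a ⊕ Fin b)) : Prop :=
  ∃ y : (Fin a ⊕ Fin b) → ℕ → ℕ,
    (∀ i ∈ A, ∀ t, y i t ≤ 1) ∧
    (∀ i ∈ A, ∀ t, dl6 d1 d2 i < t → y i t = 0) ∧
    (∀ i ∈ A, ∑ t ∈ Finset.Icc 1 d2, y i t = wl6 d1 d2 i) ∧
    (∀ t, ∑ i ∈ A, y i t ≤ C)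

/-!
A unit task has marginal value `1 + ε` and a long one `1`, so the greedy order puts every unit
task first. The `C·d1` unit tasks fit together (unit task `j` in slot `j / C + 1`), so all are
accepted. But every task of a feasible set must run at least once in `[1, d1]`: a long task has
only `d2 - d1` slots after `d1` for its `d2 - d1 + 1` units of work. Hence a feasible set has at
most `C·d1` tasks and no long task is accepted. The better schedule runs `C·(d1-1)` unit tasks
before `d1` and `C` long tasks throughout `[d1, d2]`.
-/

open Finset

theorem Feas6.mono {C d1 d2 a b : ℕ} {S T : Finset (Fin a ⊕ Fin b)} (hST : S ⊆ T)
    (hT : Feas6 C d1 d2 T) : Feas6 C d1 d2 S := by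
  obtain ⟨y, hy_le, hy_dl, hy_wl, hy_cap⟩ := hT
  exact ⟨y, fun i hi => hy_le i (hST hi), fun i hi => hy_dl i (hST hi),
    fun i hi => hy_wl i (hST hi), fun t => (sum_le_sum_of_subset hST).trans (hy_cap t)⟩

theorem Feas6.card_le {C d1 d2 a b : ℕ} {S : Finset (Fin a ⊕ Fin b)} (hd : d1 ≤ d2)
    (hS : Feas6 C d1 d2 S) : #S ≤ C * d1 := by
  obtain ⟨y, hy_le, hy_dl, hy_wl, hy_cap⟩ := hS
  -- after time `d1` there is room for at most `d2 - d1` units of work of any single task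
  have h_early : ∀ i ∈ S, 1 ≤ ∑ t ∈ Icc 1 d1, y i t := by
    intro i hi
    have h_wl := hy_wl i hi
    have h_Ioc : ∀ n, Icc 1 n = Ioc 0 n := Icc_succ_left_eq_Ioc 0
    rw [h_Ioc, ← sum_Ioc_consecutive _ (Nat.zero_le d1) hd] at h_wl
    rw [h_Ioc]
    rcases i with j | k
    · have h_late : ∑ t ∈ Ioc d1 d2, y (.inl j) t = 0 :=
        sum_eq_zero fun t ht => hy_dl _ hi t (mem_Ioc.1 ht).1
      simp only [wl6, Sum.elim_inl] at h_wl
      omega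
    · have h_late : ∑ t ∈ Ioc d1 d2, y (.inr k) t ≤ d2 - d1 :=
        (sum_le_sum fun t _ => hy_le _ hi t).trans (by simp)
      simp only [wl6, Sum.elim_inr] at h_wl
      omega
  calc #S = ∑ i ∈ S, 1 := card_eq_sum_ones S
    _ ≤ ∑ i ∈ S, ∑ t ∈ Icc 1 d1, y i t := sum_le_sum h_early
    _ = ∑ t ∈ Icc 1 d1, ∑ i ∈ S, y i t := sum_comm
    _ ≤ ∑ t ∈ Icc 1 d1, C := sum_le_sum fun t _ => hy_cap t
    _ = C * d1 := by simp [mul_comm]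

theorem card_filter_div_eq_le {a C : ℕ} (hC : 0 < C) (U : Finset (Fin a)) (q : ℕ) :
    #(U.filter fun j : Fin a => (j : ℕ) / C = q) ≤ C := by
  calc #(U.filter fun j : Fin a => (j : ℕ) / C = q) ≤ #(range C) := by
        refine card_le_card_of_injOn (fun j => (j : ℕ) % C)
          (fun j _ => mem_range.2 (Nat.mod_lt _ hC)) ?_
        intro j₁ h₁ j₂ h₂ h_mod
        simp only [coe_filter, Set.mem_ofPred_eq] at h₁ h₂
        rw [Fin.ext_iff, ← Nat.div_add_mod j₁ C, ← Nat.div_add_mod j₂ C, h₁.2, h₂.2]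
        exact congrArg _ h_mod
    _ = C := card_range C

theorem feas6_disjSum {C d1 d2 b : ℕ} (hC : 0 < C) (hd1 : 1 ≤ d1) (hd : d1 ≤ d2)
    (U : Finset (Fin (C * d1))) (L : Finset (Fin b)) (hL : #L ≤ C)
    (hUL : L.Nonempty → ∀ j ∈ U, (j : ℕ) / C + 1 < d1) :
    Feas6 C d1 d2 (U.disjSum L) := by
  have h_slot : ∀ j : Fin (C * d1), (j : ℕ) / C + 1 ≤ d1 := fun j =>
    Nat.div_lt_of_lt_mul j.isLt
  refine ⟨Sum.elim (fun j t => if t = (j : ℕ) / C + 1 then 1 else 0)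
    (fun _ t => if t ∈ Icc d1 d2 then 1 else 0), ?_, ?_, ?_, ?_⟩
  · rintro (j | k) - t <;> simp only [Sum.elim_inl, Sum.elim_inr] <;> split <;> omega
  · rintro (j | k) - t ht <;> simp only [dl6, Sum.elim_inl, Sum.elim_inr] at ht ⊢
    · exact if_neg (by have := h_slot j; omega)
    · exact if_neg (by simp only [mem_Icc]; omega)
  · rintro (j | k) -
    · simp only [Sum.elim_inl, wl6, sum_ite_eq']
      exact if_pos (mem_Icc.2 ⟨Nat.le_add_left 1 _, (h_slot j).trans hd⟩)
    · simp only [Sum.elim_inr, wl6, sum_ite_mem, inter_eq_right.2 (Icc_subset_Icc hd1 le_rfl),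
        sum_const, Nat.card_Icc, smul_eq_mul, mul_one]
      omega
  · intro t
    simp only [sum_disjSum, Sum.elim_inl, Sum.elim_inr, sum_boole, Nat.cast_id]
    by_cases h_busy : ∃ j ∈ U, t = (j : ℕ) / C + 1
    · obtain ⟨j, hj, rfl⟩ := h_busy
      have h_no_long : #{k ∈ L | (j : ℕ) / C + 1 ∈ Icc d1 d2} = 0 := by
        refine card_eq_zero.2 (filter_eq_empty_iff.2 fun k hk => ?_)
        have := hUL ⟨k, hk⟩ j hj
        simp only [mem_Icc]
        omega
      have h_same_slot : ∀ j' ∈ U, (↑j / C + 1 = ↑j' / C + 1 ↔ (j' : ℕ) / C = j / C) :=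
        fun j' _ => by omega
      rw [h_no_long, add_zero, filter_congr h_same_slot]
      exact card_filter_div_eq_le hC U _
    · push Not at h_busy
      rw [filter_false_of_mem h_busy, card_empty, zero_add]
      exact (card_filter_le _ _).trans hL

theorem val6_div_wl6_inl (ε : ℝ) (d1 d2 : ℕ) {a b : ℕ} (j : Fin a) :
    val6 ε d1 d2 (.inl j : Fin a ⊕ Fin b) / (wl6 d1 d2 (.inl j : Fin a ⊕ Fin b) : ℝ) = 1 + ε := by
  simp [val6, wl6]

theorem val6_div_wl6_inr (ε : ℝ) (d1 d2 : ℕ) {a b : ℕ} (k : Fin b) :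
    val6 ε d1 d2 (.inr k : Fin a ⊕ Fin b) / (wl6 d1 d2 (.inr k : Fin a ⊕ Fin b) : ℝ) = 1 :=
  div_self (Nat.cast_ne_zero.2 (Nat.succ_ne_zero _))

theorem greedy_eq_filter_isLeft {C d1 d2 b : ℕ} (hC : 0 < C) (hd1 : 1 ≤ d1) (hd : d1 ≤ d2)
    (prec : Fin (C * d1) ⊕ Fin b → Fin (C * d1) ⊕ Fin b → Prop) [DecidableRel prec]
    (h_inl_prec : ∀ j k, prec (.inl j) (.inr k)) (h_inr_not_prec : ∀ j k, ¬ prec (.inr k) (.inl j))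
    (A : Finset (Fin (C * d1) ⊕ Fin b))
    (hgreedy : ∀ i, i ∈ A ↔ Feas6 C d1 d2 (insert i (A.filter (fun j => prec j i)))) :
    A = univ.filter fun i => i.isLeft = true := by
  have h_units : Feas6 C d1 d2 ((univ : Finset (Fin (C * d1))).disjSum (∅ : Finset (Fin b))) :=
    feas6_disjSum hC hd1 hd univ ∅ (by simp) (by simp)
  have h_accept : ∀ j, .inl j ∈ A := by
    refine fun j => (hgreedy _).2 (h_units.mono ?_)
    rintro (j' | k) hi
    · simp
    · simp [h_inr_not_prec] at hi
  have h_reject : ∀ k, .inr k ∉ A := by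
    intro k hk
    have h_card := (card_le_card (s := insert (.inr k) (univ.disjSum ∅)) ?_).trans
      (((hgreedy _).1 hk).card_le hd)
    · simp [card_insert_of_notMem] at h_card
    · refine insert_subset_insert _ fun i hi => ?_
      rcases i with j | k'
      · simp [h_accept, h_inl_prec]
      · simp at hi
  ext (j | k) <;> simp [h_accept, h_reject]

theorem exists_feas6_le_sum_val6 {C d1 d2 N : ℕ} (ε : ℝ) (hC : 0 < C) (hd1 : 1 ≤ d1)
    (hd : d1 ≤ d2) (hN : C ≤ N) :
    ∃ B : Finset (Fin (C * d1) ⊕ Fin N), Feas6 C d1 d2 B ∧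
      (C : ℝ) * ((d2 : ℝ) - d1 + 1) + (1 + ε) * (C * ((d1 : ℝ) - 1)) ≤
        ∑ i ∈ B, val6 ε d1 d2 i := by
  refine ⟨(univ.filter fun j : Fin (C * d1) => (j : ℕ) < C * (d1 - 1)).disjSum
    (univ.filter fun k : Fin N => (k : ℕ) < C), feas6_disjSum hC hd1 hd _ _
    (by simp [Fin.card_filter_val_lt, hN]) fun _ j hj => ?_, le_of_eq ?_⟩
  · have := Nat.div_lt_of_lt_mul (mem_filter.1 hj).2
    omega
  · simp only [val6, sum_disjSum, Sum.elim_inl, Sum.elim_inr, sum_const, Fin.card_filter_val_lt,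
      Nat.mul_le_mul_left C (Nat.sub_le d1 1), inf_of_le_right, hN, nsmul_eq_mul, Nat.cast_mul,
      Nat.cast_add, Nat.cast_one, Nat.cast_sub hd1, Nat.cast_sub hd]
    ring

theorem greedy_lower_bound_instance_general (C d1 d2 N : ℕ) (ε : ℝ)
    (hε : 0 < ε) (hC : 0 < C) (hd1 : 1 ≤ d1) (h12 : d1 < d2) (hN : C ≤ N)
    (prec : (Fin (C * d1) ⊕ Fin N) → (Fin (C * d1) ⊕ Fin N) → Prop)
    [DecidableRel prec]
    (htri : ∀ i j, prec i j ∨ i = j ∨ prec j i)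
    (hmv : ∀ i j, prec i j →
      val6 ε d1 d2 j / (wl6 d1 d2 j : ℝ) ≤ val6 ε d1 d2 i / (wl6 d1 d2 i : ℝ))
    (A : Finset (Fin (C * d1) ⊕ Fin N))
    (hgreedy : ∀ i, i ∈ A ↔ Feas6 C d1 d2 (insert i (A.filter (fun j => prec j i)))) :
    A = Finset.univ.filter (fun i => (Sum.isLeft i) = true) ∧
    (∑ i ∈ A, val6 ε d1 d2 i) = (1 + ε) * (C * d1) ∧
    (∃ B : Finset (Fin (C * d1) ⊕ Fin N), Feas6 C d1 d2 B ∧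
      (C : ℝ) * ((d2 : ℝ) - d1 + 1) + (1 + ε) * (C * ((d1 : ℝ) - 1)) ≤
        ∑ i ∈ B, val6 ε d1 d2 i) ∧
    (∑ i ∈ A, val6 ε d1 d2 i) /
        ((C : ℝ) * ((d2 : ℝ) - d1 + 1) + (1 + ε) * (C * ((d1 : ℝ) - 1))) ≤
      ((1 + ε) * d1) / ((1 + ε) * ((d1 : ℝ) - 1) + ((d2 : ℝ) - d1 + 1)) := by
  have h_inr_not_prec : ∀ j k, ¬ prec (.inr k) (.inl j) := fun j k h => by
    have h_mv := hmv _ _ h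
    rw [val6_div_wl6_inl, val6_div_wl6_inr] at h_mv
    linarith
  have h_inl_prec : ∀ j k, prec (.inl j) (.inr k) := fun j k =>
    (htri _ _).resolve_right (by simp [h_inr_not_prec])
  have hA := greedy_eq_filter_isLeft hC hd1 h12.le prec h_inl_prec h_inr_not_prec A hgreedy
  have h_welfare : ∑ i ∈ A, val6 ε d1 d2 i = (1 + ε) * (C * d1) := by
    simp only [hA, sum_filter, Fintype.sum_sum_type, Sum.isLeft_inl, Sum.isLeft_inr, val6,
      Sum.elim_inl, if_true, Bool.false_eq_true, if_false, sum_const, card_univ,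
      Fintype.card_fin, nsmul_eq_mul, Nat.cast_mul]
    ring
  refine ⟨hA, h_welfare, exists_feas6_le_sum_val6 ε hC hd1 h12.le hN, ?_⟩
  rw [h_welfare, show (1 + ε) * (C * d1 : ℝ) = C * ((1 + ε) * d1) by ring,
    show (C : ℝ) * ((d2 : ℝ) - d1 + 1) + (1 + ε) * (C * ((d1 : ℝ) - 1)) =
      C * ((1 + ε) * ((d1 : ℝ) - 1) + ((d2 : ℝ) - d1 + 1)) by ring,
    mul_div_mul_left _ _ (Nat.cast_ne_zero.2 hC.ne')]

/-- On the instance with `C·d1'` unit tasks (value `1+ε`, workload `1`, deadline `d1'`)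
and `N ≥ C` long tasks (value and workload `d2'-d1'+1`, deadline `d2'`), any greedy
algorithm considering tasks in nonincreasing marginal-value order and accepting a task
iff it remains jointly feasible accepts exactly the unit tasks, obtaining welfare
`(1+ε)·C·d1'`, while a feasible schedule obtains at least
`C·(d2'-d1'+1) + (1+ε)·C·(d1'-1)`; hence the greedy ratio on this instance is at most
`((1+ε)d1') / ((1+ε)(d1'-1) + (d2'-d1'+1))`. -/
theorem greedy_lower_bound_instance (C d1 d2 N : ℕ) (ε : ℝ)
    (hε : 0 < ε) (hC : 0 < C) (hd1 : 1 ≤ d1) (h12 : d1 < d2) (hN : C ≤ N)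
    (prec : (Fin (C * d1) ⊕ Fin N) → (Fin (C * d1) ⊕ Fin N) → Prop)
    [DecidableRel prec]
    (htri : ∀ i j, prec i j ∨ i = j ∨ prec j i)
    (htrans : ∀ i j l, prec i j → prec j l → prec i l)
    (hirr : ∀ i, ¬ prec i i)
    (hmv : ∀ i j, prec i j →
      val6 ε d1 d2 j / (wl6 d1 d2 j : ℝ) ≤ val6 ε d1 d2 i / (wl6 d1 d2 i : ℝ))
    (A : Finset (Fin (C * d1) ⊕ Fin N))
    (hgreedy : ∀ i, i ∈ A ↔ Feas6 C d1 d2 (insert i (A.filter (fun j => prec j i)))) :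
    A = Finset.univ.filter (fun i => (Sum.isLeft i) = true) ∧
    (∑ i ∈ A, val6 ε d1 d2 i) = (1 + ε) * (C * d1) ∧
    (∃ B : Finset (Fin (C * d1) ⊕ Fin N), Feas6 C d1 d2 B ∧
      (C : ℝ) * ((d2 : ℝ) - d1 + 1) + (1 + ε) * (C * ((d1 : ℝ) - 1)) ≤
        ∑ i ∈ B, val6 ε d1 d2 i) ∧
    (∑ i ∈ A, val6 ε d1 d2 i) /
        ((C : ℝ) * ((d2 : ℝ) - d1 + 1) + (1 + ε) * (C * ((d1 : ℝ) - 1))) ≤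
      ((1 + ε) * d1) / ((1 + ε) * ((d1 : ℝ) - 1) + ((d2 : ℝ) - d1 + 1)) :=
  greedy_lower_bound_instance_general C d1 d2 N ε hε hC hd1 h12 hN prec htri hmv A hgreedy
end

section
/- Let a task T_i have deadline d_i, workload D_i, parallelism bound k_i ≤ C, and slackness s_i = d_i/len_i ≥ s where len_i = ⌈D_i/k_i⌉. Suppose at some moment the number of time slots t ∈ [1, d_i] with at least k_i available machines is μ ≤ len_i - 1, and T_i cannot be fully allocated, i.e., Σ_{t ≤ d_i} min(k_i, available(t)) < D_i. Then the utilized fraction of the C·d_i total capacity in [1, d_i] is at least (C·d_i - μ·C - (D_i - μ·k_i)) / (C·d_i) ≥ (s-1)/s. -/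
/-!
The slots split into the `μ` slots with at least `k` free machines, each of which may be
entirely free, and the others, where the task could take everything that is free. Since the
task does not fit, the free capacity is below `μ·C + (D - μ·k)`. As `μ < len = ⌈D/k⌉` and
`k ≤ C`, this is at most `C·len ≤ C·d/s`, so at most a fraction `1/s` of the capacity is free.
-/

open Finset

theorem sum_add_card_filter_nsmul_le_card_filter_nsmul_add_sum_min {ι M : Type*}
    [AddCommMonoid M] [LinearOrder M] [IsOrderedAddMonoid M] (s : Finset ι) (f : ι → M) {k C : M} (hf : ∀ t ∈ s, f t ≤ C) :
    ∑ t ∈ s, f t + #(s.filter (k ≤ f ·)) • k ≤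
      #(s.filter (k ≤ f ·)) • C + ∑ t ∈ s, min k (f t) := by
  have hpoint : ∀ t ∈ s, f t + (if k ≤ f t then k else 0) ≤
      (if k ≤ f t then C else 0) + min k (f t) := by
    intro t ht
    split_ifs with hkf
    · rw [min_eq_left hkf]
      exact add_le_add_left (hf t ht) k
    · rw [min_eq_right (le_of_not_ge hkf), zero_add, add_zero]
  simpa only [sum_add_distrib, sum_ite, sum_const_zero, sum_const, add_zero] using
    sum_le_sum hpoint

theorem add_sub_mul_le_mul {μ C D k L : ℝ} (hμL : μ ≤ L) (hkC : k ≤ C) (hDL : D ≤ k * L) :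
    μ * C + (D - μ * k) ≤ C * L := by
  nlinarith [mul_le_mul_of_nonneg_right hμL (sub_nonneg.2 hkC)]

theorem sub_one_div_le_one_sub_div {s X N : ℝ} (hs : 0 < s) (hN : 0 < N) (hX : s * X ≤ N) :
    (s - 1) / s ≤ (N - X) / N := by
  rw [div_le_div_iff₀ hs hN]
  linarith

theorem greedy_utilization_bound_general (C d D k μ : ℕ) (avail : ℕ → ℕ) (s : ℝ)
    (hk : 0 < k) (hkC : k ≤ C) (hd : 0 < d)
    (hs1 : 1 ≤ s)
    (hslack : s ≤ (d : ℝ) / (((D + k - 1) / k : ℕ) : ℝ))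
    (havail : ∀ t, avail t ≤ C)
    (hμ : μ = ((Finset.Icc 1 d).filter (fun t => k ≤ avail t)).card)
    (hμle : μ + 1 ≤ (D + k - 1) / k)
    (hfail : ∑ t ∈ Finset.Icc 1 d, min k (avail t) < D) :
    ((C * d : ℝ) - (μ : ℝ) * C - ((D : ℝ) - (μ : ℝ) * k)) / ((C : ℝ) * d) ≤
        ((C * d : ℝ) - ∑ t ∈ Finset.Icc 1 d, (avail t : ℝ)) / ((C : ℝ) * d) ∧
    (s - 1) / s ≤
        ((C * d : ℝ) - (μ : ℝ) * C - ((D : ℝ) - (μ : ℝ) * k)) / ((C : ℝ) * d) := by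
  set L := (D + k - 1) / k
  have hCd : (0 : ℝ) < C * d := by have := hk.trans_le hkC; positivity
  have hDL : (D : ℝ) ≤ k * L := by exact_mod_cast (le_smul_ceilDiv hk : D ≤ k * L)
  have hL : (0 : ℝ) < L := Nat.cast_pos.2 (hμle.trans_lt' μ.succ_pos)
  have hsL : s * L ≤ d := (le_div_iff₀ hL).1 hslack
  have hfree : ∑ t ∈ Icc 1 d, (avail t : ℝ) ≤ μ * C + (D - μ * k) := by
    have hsplit := sum_add_card_filter_nsmul_le_card_filter_nsmul_add_sum_min (Icc 1 d)
      (fun t => (avail t : ℝ)) (k := k) (C := C) (fun t _ => Nat.cast_le.2 (havail t))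
    have hfailR : ∑ t ∈ Icc 1 d, min (k : ℝ) (avail t) < D := by exact_mod_cast hfail
    simp only [Nat.cast_le, ← hμ, nsmul_eq_mul] at hsplit
    linarith
  have hs : 0 < s := by linarith
  have hμL : (μ : ℝ) ≤ L := by exact_mod_cast (Nat.le_succ μ).trans hμle
  have hscaled : s * (μ * C + (D - μ * k)) ≤ C * d := calc
    s * (μ * C + (D - μ * k)) ≤ s * (C * L) :=
      mul_le_mul_of_nonneg_left (add_sub_mul_le_mul hμL (Nat.cast_le.2 hkC) hDL) hs.le
    _ = C * (s * L) := by ring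
    _ ≤ C * d := mul_le_mul_of_nonneg_left hsL C.cast_nonneg
  refine ⟨(div_le_div_iff_of_pos_right hCd).2 (by linarith), ?_⟩
  rw [sub_sub]
  exact sub_one_div_le_one_sub_div hs hCd hscaled

/-- If a task with workload `D`, deadline `d`, parallelism bound `k ≤ C` and slackness
at least `s` cannot be fully allocated, and only `μ ≤ ⌈D/k⌉ - 1` slots in `[1, d]` have
at least `k` available machines, then the utilization of `[1, d]` is at least
`(C·d - μ·C - (D - μ·k)) / (C·d) ≥ (s-1)/s`. -/
theorem greedy_utilization_bound (C d D k μ : ℕ) (avail : ℕ → ℕ) (s : ℝ)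
    (hk : 0 < k) (hkC : k ≤ C) (hd : 0 < d) (hD : 0 < D)
    (hs1 : 1 ≤ s)
    (hslack : s ≤ (d : ℝ) / (((D + k - 1) / k : ℕ) : ℝ))
    (havail : ∀ t, avail t ≤ C)
    (hμ : μ = ((Finset.Icc 1 d).filter (fun t => k ≤ avail t)).card)
    (hμle : μ + 1 ≤ (D + k - 1) / k)
    (hfail : ∑ t ∈ Finset.Icc 1 d, min k (avail t) < D) :
    ((C * d : ℝ) - (μ : ℝ) * C - ((D : ℝ) - (μ : ℝ) * k)) / ((C : ℝ) * d) ≤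
        ((C * d : ℝ) - ∑ t ∈ Finset.Icc 1 d, (avail t : ℝ)) / ((C : ℝ) * d) ∧
    (s - 1) / s ≤
        ((C * d : ℝ) - (μ : ℝ) * C - ((D : ℝ) - (μ : ℝ) * k)) / ((C : ℝ) * d) :=
  greedy_utilization_bound_general C d D k μ avail s hk hkC hd hs1 hslack havail hμ hμle hfail
end

section
/- Given C ∈ ℕ⁺, d ∈ ℕ⁺, k ≤ C, len ≤ d, and D ≤ len·k with len = ⌈D/k⌉ and d/len ≥ s ≥ 1 (s real), the inequality (C·(d - len) + (C - k) + (len·k - D)) / (C·d) ≥ (s-1)/s holds. -/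
/-!
Since `s ≤ d / len`, we have `len / d ≤ 1 / s`, hence `(d - len) / d ≥ 1 - 1 / s`. Scaling this
fraction by `C` and adding the nonnegative slacks `C - k` and `len * k - D` to its numerator can only
increase it.
-/

section LinearOrderedField

variable {K : Type*} [Field K] [LinearOrder K] [IsStrictOrderedRing K]

theorem sub_one_div_le_sub_div_of_le_div {s d l : K} (hs : 0 < s) (hsl : s ≤ d / l) :
    (s - 1) / s ≤ (d - l) / d := by
  have hdl : 0 < d / l := hs.trans_le hsl
  have hd : d ≠ 0 := by
    rintro rfl
    simp at hdl
  rw [sub_div, div_self hs.ne', sub_div, div_self hd, one_div, ← inv_div]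
  exact sub_le_sub_left (inv_anti₀ hs hsl) 1

theorem div_le_mul_add_div_mul {a c d x : K} (hc : 0 < c) (hd : 0 ≤ d) (hx : 0 ≤ x) :
    a / d ≤ (c * a + x) / (c * d) := by
  rw [← mul_div_mul_left a d hc.ne']
  gcongr
  linarith

end LinearOrderedField

theorem utilization_arithmetic_core_general (C d k len D : ℕ) (s : ℝ)
    (hC : 0 < C)
    (hkC : k ≤ C) (hDlen : D ≤ len * k)
    (hs1 : 1 ≤ s) (hs : s ≤ (d : ℝ) / (len : ℝ)) :
    (s - 1) / s ≤
      ((C : ℝ) * ((d : ℝ) - (len : ℝ)) + ((C : ℝ) - (k : ℝ)) +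
          ((len : ℝ) * (k : ℝ) - (D : ℝ))) / ((C : ℝ) * (d : ℝ)) := by
  have hkC' : (k : ℝ) ≤ C := by exact_mod_cast hkC
  have hDlen' : (D : ℝ) ≤ len * k := by exact_mod_cast hDlen
  calc (s - 1) / s ≤ ((d : ℝ) - len) / d :=
        sub_one_div_le_sub_div_of_le_div (zero_lt_one.trans_le hs1) hs
    _ ≤ _ := by
        rw [add_assoc]
        exact div_le_mul_add_div_mul (by exact_mod_cast hC) d.cast_nonneg (by linarith)

/-- Arithmetic core of the greedy utilization bound:
`(C·(d-len) + (C-k) + (len·k-D)) / (C·d) ≥ (s-1)/s`. -/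
theorem utilization_arithmetic_core (C d k len D : ℕ) (s : ℝ)
    (hC : 0 < C) (hd : 0 < d) (hk : 0 < k) (hlen : 0 < len) (hD : 0 < D)
    (hkC : k ≤ C) (hlend : len ≤ d) (hDlen : D ≤ len * k)
    (hlendef : len = (D + k - 1) / k)
    (hs1 : 1 ≤ s) (hs : s ≤ (d : ℝ) / (len : ℝ)) :
    (s - 1) / s ≤
      ((C : ℝ) * ((d : ℝ) - (len : ℝ)) + ((C : ℝ) - (k : ℝ)) +
          ((len : ℝ) * (k : ℝ) - (D : ℝ))) / ((C : ℝ) * (d : ℝ)) :=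
  utilization_arithmetic_core_general C d k len D s hC hkC hDlen hs1 hs
end

section
/- In the single-machine case (C = 1 and all parallelism bounds k_i = 1), the boundary condition for a set S of tasks is equivalent to the classical EDF feasibility condition: for every deadline τ_m, the total workload of tasks with deadline at most τ_m is at most τ_m, i.e., Σ_{T_j∈S : d_j ≤ τ_m} D_j ≤ τ_m for all m ∈ {1,...,L}. -/
open Finset

section MandatoryWork

variable {ι : Type*} (S : Finset ι) (d D : ι → ℕ)

/-- Task `j` can use at most `d j - t` units of time after `t`, so at least `D j - (d j - t)` of
its work has to be done by `t`. -/
def mandatoryWork (t : ℕ) : ℕ := ∑ j ∈ S, (D j - (d j - t))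

variable {S d D}

theorem sum_filter_le_mandatoryWork (t : ℕ) :
    ∑ j ∈ S with d j ≤ t, D j ≤ mandatoryWork S d D t := by
  calc ∑ j ∈ S with d j ≤ t, D j
      = ∑ j ∈ S with d j ≤ t, (D j - (d j - t)) :=
        sum_congr rfl fun j hj => by rw [Nat.sub_eq_zero_of_le (mem_filter.1 hj).2, tsub_zero]
    _ ≤ mandatoryWork S d D t := sum_le_sum_of_subset (filter_subset _ _)

theorem sum_filter_le_of_forall_deadline
    (h : ∀ j ∈ S, ∑ i ∈ S with d i ≤ d j, D i ≤ d j) (t : ℕ) :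
    ∑ i ∈ S with d i ≤ t, D i ≤ t := by
  obtain hempty | hne := (S.filter fun i => d i ≤ t).eq_empty_or_nonempty
  · simp [hempty]
  obtain ⟨k, hk, hkmax⟩ := exists_max_image _ d hne
  obtain ⟨hkS, hkt⟩ := mem_filter.1 hk
  calc ∑ i ∈ S with d i ≤ t, D i
      ≤ ∑ i ∈ S with d i ≤ d k, D i :=
        sum_le_sum_of_subset (fun i hi => mem_filter.2 ⟨(mem_filter.1 hi).1, hkmax i hi⟩)
    _ ≤ d k := h k hkS
    _ ≤ t := hkt

theorem mandatoryWork_eq_sum_filter {t T : ℕ} (hlate : ∀ j ∈ S, T < d j → D j ≤ d j - t) :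
    mandatoryWork S d D t = ∑ j ∈ S with d j ≤ T, (D j - (d j - t)) :=
  (sum_filter_of_ne fun j hj hpos => not_lt.1 fun hT => hpos (by simp [hlate j hj hT])).symm

theorem mandatoryWork_le_of_forall_deadline
    (h : ∀ j ∈ S, ∑ i ∈ S with d i ≤ d j, D i ≤ d j) (t : ℕ) :
    mandatoryWork S d D t ≤ t := by
  classical
  obtain hempty | hne := (S.filter fun j => t < d j ∧ d j - t < D j).eq_empty_or_nonempty
  · have hlate : ∀ j ∈ S, t < d j → D j ≤ d j - t := fun j hj ht =>
      not_lt.1 fun hlt => (filter_eq_empty_iff.1 hempty) hj ⟨ht, hlt⟩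
    calc mandatoryWork S d D t
        = ∑ j ∈ S with d j ≤ t, (D j - (d j - t)) := mandatoryWork_eq_sum_filter hlate
      _ ≤ ∑ j ∈ S with d j ≤ t, D j := sum_le_sum fun _ _ => tsub_le_self
      _ ≤ t := sum_filter_le_of_forall_deadline h t
  -- `k` is the latest task that is forced to run before `t`
  obtain ⟨k, hk, hkmax⟩ := exists_max_image _ d hne
  obtain ⟨hkS, htk, hkD⟩ := mem_filter.1 hk
  have hlate : ∀ j ∈ S, d k < d j → D j ≤ d j - t := fun j hj hkj =>
    not_lt.1 fun hlt => (hkmax j (mem_filter.2 ⟨hj, by omega, hlt⟩)).not_gt hkj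
  have hkdue : k ∈ S.filter fun j => d j ≤ d k := mem_filter.2 ⟨hkS, le_rfl⟩
  have hsplit : mandatoryWork S d D t + (d k - t) ≤ ∑ j ∈ S with d j ≤ d k, D j := by
    rw [mandatoryWork_eq_sum_filter hlate, ← add_sum_erase _ _ hkdue, ← add_sum_erase _ _ hkdue]
    have hrest := sum_le_sum fun j (_ : j ∈ (S.filter fun j => d j ≤ d k).erase k) =>
      (tsub_le_self : D j - (d j - t) ≤ D j)
    omega
  have hdue := h k hkS
  omega

end MandatoryWork

section CapacitySequence

variable {C L : ℕ} {τ lamf : ℕ → ℕ}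

theorem lamCseq_le (hf : Monotone lamf) (s : ℕ) : lamCseq C L τ lamf s ≤ lamf s := by
  induction s with
  | zero => exact Nat.zero_le _
  | succ s ih =>
    have : lamf s ≤ lamf (s + 1) := hf s.le_succ
    rw [lamCseq]
    omega

theorem lamCseq_succ_of_le {s : ℕ} (h : lamCseq C L τ lamf s ≤ lamf (s + 1)) :
    lamCseq C L τ lamf (s + 1) =
      min (lamf (s + 1)) (lamCseq C L τ lamf s + C * (τ (L - s) - τ (L - s - 1))) := by
  rw [lamCseq]
  omega

theorem tsub_lamCseq_le {W : ℕ} (hτ : MonotoneOn τ (Set.Iic L)) (hf : Monotone lamf)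
    (h0 : W ≤ C * τ L) (hf_le : ∀ s ≤ L, W - lamf s ≤ C * τ (L - s)) :
    ∀ s ≤ L, W - lamCseq C L τ lamf s ≤ C * τ (L - s) := by
  intro s
  induction s with
  | zero => simpa [lamCseq] using h0
  | succ s ih =>
    intro hs
    have hprev := ih (by omega)
    have hmono : C * τ (L - s - 1) ≤ C * τ (L - s) :=
      Nat.mul_le_mul_left C (hτ (by simp; omega) (by simp) (by omega))
    have hnext := hf_le (s + 1) hs
    rw [lamCseq_succ_of_le ((lamCseq_le hf s).trans (hf s.le_succ)), Nat.mul_sub]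
    rw [show L - (s + 1) = L - s - 1 by omega] at hnext ⊢
    omega

end CapacitySequence

section SingleMachine

variable {ι : Type*} (S : Finset ι) (dl Dw : ι → ℕ) (τ : ℕ → ℕ) (L : ℕ)

theorem lamS_one (m : ℕ) :
    lamS S dl Dw (fun _ => 1) τ L m = ∑ j ∈ S, min (Dw j) (dl j - τ (L - m)) := by
  simp only [lamS, ceilDiv, Nat.add_sub_cancel, Nat.div_one, one_mul, min_def]

theorem sum_tsub_lamS_one (m : ℕ) :
    (∑ j ∈ S, Dw j) - lamS S dl Dw (fun _ => 1) τ L m = mandatoryWork S dl Dw (τ (L - m)) := by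
  rw [lamS_one, ← sum_tsub_distrib _ fun _ _ => min_le_left _ _]
  exact sum_congr rfl fun _ _ => tsub_min

variable {τ L} in
theorem lamS_one_monotone (hτ : MonotoneOn τ (Set.Iic L)) :
    Monotone (lamS S dl Dw (fun _ => 1) τ L) := by
  intro a b hab
  rw [lamS_one, lamS_one]
  gcongr
  exact hτ (by simp) (by simp) (by omega)

end SingleMachine

theorem boundary_iff_edf_general {ι : Type*} (S : Finset ι) (dl Dw : ι → ℕ)
    (L : ℕ) (τ : ℕ → ℕ)
    (hτmono : ∀ m < L, τ m < τ (m + 1))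
    (hdl : ∀ j ∈ S, ∃ m, 1 ≤ m ∧ m ≤ L ∧ dl j = τ m) :
    BoundaryCond S dl Dw (fun _ => 1) τ 1 L ↔
      ∀ m, 1 ≤ m → m ≤ L →
        (∑ j ∈ S.filter (fun j => dl j ≤ τ m), Dw j) ≤ τ m := by
  have hτ : MonotoneOn τ (Set.Iic L) := (strictMonoOn_Iic_of_lt_succ hτmono).monotoneOn
  have hlam := lamS_one_monotone S dl Dw hτ
  constructor
  · intro hB m _ hm
    calc ∑ j ∈ S with dl j ≤ τ m, Dw j
        ≤ mandatoryWork S dl Dw (τ m) := sum_filter_le_mandatoryWork _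
      _ = (∑ j ∈ S, Dw j) - lamS S dl Dw (fun _ => 1) τ L (L - m) := by
        rw [sum_tsub_lamS_one, Nat.sub_sub_self hm]
      _ ≤ muC S dl Dw (fun _ => 1) τ 1 L m := Nat.sub_le_sub_left (lamCseq_le hlam _) _
      _ ≤ τ m := by simpa using hB m hm
  · intro hE
    have hdead : ∀ j ∈ S, ∑ i ∈ S with dl i ≤ dl j, Dw i ≤ dl j := fun j hj => by
      obtain ⟨m, hm1, hmL, hdj⟩ := hdl j hj
      exact hdj ▸ hE m hm1 hmL
    have hall : ∑ j ∈ S with dl j ≤ τ L, Dw j = ∑ j ∈ S, Dw j :=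
      sum_filter_of_ne fun j hj _ => by
        obtain ⟨m, -, hmL, hdj⟩ := hdl j hj
        exact hdj ▸ hτ (by simp; omega) (by simp) hmL
    intro m hm
    have key := tsub_lamCseq_le (C := 1) hτ hlam
      (by simpa [hall] using sum_filter_le_of_forall_deadline hdead (τ L))
      (fun s _ => by
        rw [one_mul, sum_tsub_lamS_one]
        exact mandatoryWork_le_of_forall_deadline hdead _)
      (L - m) (Nat.sub_le L m)
    rwa [Nat.sub_sub_self hm] at key

/-- In the single-machine case (`C = 1`, all parallelism bounds equal `1`), the
boundary condition is equivalent to classical EDF feasibility: for every deadline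
`τ_m`, the total workload of tasks with deadline at most `τ_m` is at most `τ_m`. -/
theorem boundary_iff_edf {ι : Type*} [DecidableEq ι] (S : Finset ι) (dl Dw : ι → ℕ)
    (L : ℕ) (τ : ℕ → ℕ)
    (hτ0 : τ 0 = 0) (hτmono : ∀ m < L, τ m < τ (m + 1)) (hL : 0 < L)
    (hdl : ∀ j ∈ S, ∃ m, 1 ≤ m ∧ m ≤ L ∧ dl j = τ m)
    (hDpos : ∀ j ∈ S, 0 < Dw j) :
    BoundaryCond S dl Dw (fun _ => 1) τ 1 L ↔
      ∀ m, 1 ≤ m → m ≤ L →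
        (∑ j ∈ S.filter (fun j => dl j ≤ τ m), Dw j) ≤ τ m :=
  boundary_iff_edf_general S dl Dw L τ hτmono hdl
end
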